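/- Let G be a graph and p = (v_1, v_2, ..., v_r) a shortest path from v_1 to v_r, with r odd. Let σ = S_{v_1} · S_{v_3} · S_{v_5} ⋯ S_{v_r} be the product of graph-state stabilizer generators at the odd-indexed path vertices. Then σ acts with Pauli X on each odd-indexed vertex v_1, v_3, ..., v_r, acts with Pauli Z on the remaining vertices of its support, and has trivial support on every even-indexed path vertex v_2, v_4, ..., v_{r-1}. -/
import Mathlib


/-- The X-component (symplectic representation) of a single-qubit Pauli label
(`0 = I, 1 = X, 2 = Y, 3 = Z`). -/
def pstrX : Fin 4 → ZMod 2 := ![0, 1, 1, 0]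

/-- The Z-component (symplectic representation) of a single-qubit Pauli label. -/
def pstrZ : Fin 4 → ZMod 2 := ![0, 0, 1, 1]

/-- Recover a Pauli label from its symplectic components. -/
def pauliOfXZ (x z : ZMod 2) : Fin 4 :=
  if x = 1 then (if z = 1 then 2 else 1) else (if z = 1 then 3 else 0)

/-- The Pauli string of the graph-state stabilizer generator
`S_w = X_w ∏_{u ∈ N(w)} Z_u`. -/
def genStr {n : ℕ} (G : SimpleGraph (Fin n)) [DecidableRel G.Adj] (w : Fin n) :
    Fin n → Fin 4 :=
  fun k => if k = w then 1 else if G.Adj w k then 3 else 0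

/-- The Pauli string (mod phase) of the stabilizer element `∏_{w ∈ B} S_w` of the graph
state of `G`: symplectic components add mod 2. -/
def stabStr {n : ℕ} (G : SimpleGraph (Fin n)) [DecidableRel G.Adj]
    (B : Finset (Fin n)) : Fin n → Fin 4 :=
  fun k => pauliOfXZ (∑ w ∈ B, pstrX (genStr G w k)) (∑ w ∈ B, pstrZ (genStr G w k))

lemma pstrX_genStr {n : ℕ} (G : SimpleGraph (Fin n)) [DecidableRel G.Adj] (w k : Fin n) :
    pstrX (genStr G w k) = if k = w then 1 else 0 := by
  unfold genStr; split_ifs with h1 h2 <;> simp [pstrX]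

lemma pstrZ_genStr {n : ℕ} (G : SimpleGraph (Fin n)) [DecidableRel G.Adj] (w k : Fin n) :
    pstrZ (genStr G w k) = if k = w then 0 else if G.Adj w k then 1 else 0 := by
  unfold genStr; split_ifs with h1 h2 <;> simp [pstrZ]

/-- Let `p 0, p 1, …, p (r-1)` be a shortest path in `G` with `r` odd,
and let `σ = S_{p 0} · S_{p 2} ⋯ S_{p (r-1)}` be the product of the graph-state
stabilizer generators at the odd-numbered (even-index) path vertices. Then `σ` acts
with Pauli `X` on each even-index path vertex, has trivial support on every odd-index
path vertex, and acts with Pauli `Z` on every other vertex of its support. -/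
theorem stmt12 (n r : ℕ) (G : SimpleGraph (Fin n)) [DecidableRel G.Adj]
    (hr : r % 2 = 1) (p : ℕ → Fin n)
    (hadj : ∀ t, t + 1 < r → G.Adj (p t) (p (t + 1)))
    (hshort : G.dist (p 0) (p (r - 1)) = r - 1) :
    let σ : Fin n → Fin 4 := fun k =>
      pauliOfXZ
        (∑ t ∈ (Finset.range r).filter (fun t => t % 2 = 0), pstrX (genStr G (p t) k))
        (∑ t ∈ (Finset.range r).filter (fun t => t % 2 = 0), pstrZ (genStr G (p t) k))
    (∀ t, t < r → t % 2 = 0 → σ (p t) = 1) ∧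
    (∀ t, t < r → t % 2 = 1 → σ (p t) = 0) ∧
    (∀ k : Fin n, σ k ≠ 0 → (∃ t, t < r ∧ t % 2 = 0 ∧ p t = k) ∨ σ k = 3) := by
  have hr0 : 0 < r := by omega
  have hwalk : ∀ m i j, i + m = j → j < r → ∃ w : G.Walk (p i) (p j), w.length = m := by
    intro m
    induction m with
    | zero =>
      intro i j hij _
      rw [Nat.add_zero] at hij
      subst hij
      exact ⟨SimpleGraph.Walk.nil, rfl⟩
    | succ m ih =>
      intro i j hij hjr
      obtain ⟨w, hw⟩ := ih i (i + m) rfl (by omega)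
      have hj : i + m + 1 = j := by omega
      subst hj
      exact ⟨w.concat (hadj (i + m) (by omega)), by
        rw [SimpleGraph.Walk.length_concat, hw]⟩
  have hdist : ∀ i j, i ≤ j → j < r → G.dist (p i) (p j) = j - i := by
    intro i j hij hjr
    obtain ⟨w1, h1⟩ := hwalk i 0 i (by omega) (by omega)
    obtain ⟨w2, h2⟩ := hwalk (j - i) i j (by omega) hjr
    obtain ⟨w3, h3⟩ := hwalk (r - 1 - j) j (r - 1) (by omega) (by omega)
    have hub := SimpleGraph.dist_le w2
    obtain ⟨w2', hw2'⟩ := SimpleGraph.Reachable.exists_walk_length_eq_dist ⟨w2⟩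
    have hlb := SimpleGraph.dist_le ((w1.append w2').append w3)
    rw [hshort, SimpleGraph.Walk.length_append, SimpleGraph.Walk.length_append,
      h1, h3, hw2'] at hlb
    omega
  have hinj : ∀ i j, i < r → j < r → p i = p j → i = j := by
    intro i j hi hj hpij
    rcases le_total i j with h | h
    · have := hdist i j h hj
      rw [hpij, SimpleGraph.dist_self] at this; omega
    · have := hdist j i h hi
      rw [hpij, SimpleGraph.dist_self] at this; omega
  have hadj' : ∀ i j, i < r → j < r → G.Adj (p i) (p j) → (i = j + 1 ∨ j = i + 1) := by
    intro i j hi hj ha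
    have hd1 : G.dist (p i) (p j) ≤ 1 := SimpleGraph.dist_le ha.toWalk
    have hne : i ≠ j := fun h => by subst h; exact G.irrefl ha
    rcases le_total i j with h | h
    · have := hdist i j h hj; omega
    · have := hdist j i h hi
      rw [SimpleGraph.dist_comm] at this; omega
  intro σ
  have hmem : ∀ s, s ∈ (Finset.range r).filter (fun t => t % 2 = 0) ↔ s < r ∧ s % 2 = 0 := by
    intro s; simp [Finset.mem_filter]
  refine ⟨?_, ?_, ?_⟩
  · -- even index: X
    intro t ht hte
    show pauliOfXZ _ _ = 1
    have hx : (∑ s ∈ (Finset.range r).filter (fun t => t % 2 = 0),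
        pstrX (genStr G (p s) (p t))) = 1 := by
      rw [Finset.sum_eq_single t]
      · rw [pstrX_genStr, if_pos rfl]
      · intro s hs hst
        rw [pstrX_genStr, if_neg]
        intro h
        exact hst (hinj t s ht ((hmem s).mp hs).1 h).symm
      · intro h; exact absurd ((hmem t).mpr ⟨ht, hte⟩) h
    have hz : (∑ s ∈ (Finset.range r).filter (fun t => t % 2 = 0),
        pstrZ (genStr G (p s) (p t))) = 0 := by
      apply Finset.sum_eq_zero
      intro s hs
      obtain ⟨hsr, hse⟩ := (hmem s).mp hs
      rw [pstrZ_genStr]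
      split_ifs with h1 h2
      · rfl
      · exfalso
        rcases hadj' s t hsr ht h2 with h | h <;> omega
      · rfl
    rw [hx, hz]; decide
  · -- odd index: I
    intro t ht hto
    show pauliOfXZ _ _ = 0
    have hx : (∑ s ∈ (Finset.range r).filter (fun t => t % 2 = 0),
        pstrX (genStr G (p s) (p t))) = 0 := by
      apply Finset.sum_eq_zero
      intro s hs
      obtain ⟨hsr, hse⟩ := (hmem s).mp hs
      rw [pstrX_genStr, if_neg]
      intro h; have := hinj t s ht hsr h; omega
    have hz : (∑ s ∈ (Finset.range r).filter (fun t => t % 2 = 0),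
        pstrZ (genStr G (p s) (p t))) = 0 := by
      have ht1 : t + 1 < r := by omega
      have key : ∀ s ∈ (Finset.range r).filter (fun t => t % 2 = 0),
          pstrZ (genStr G (p s) (p t)) =
            (if s = t - 1 then 1 else 0) + (if s = t + 1 then 1 else 0) := by
        intro s hs
        obtain ⟨hsr, hse⟩ := (hmem s).mp hs
        rw [pstrZ_genStr]
        have hne : p t ≠ p s := fun h => by have := hinj t s ht hsr h; omega
        rw [if_neg hne]
        by_cases ha : G.Adj (p s) (p t)
        · rw [if_pos ha]
          rcases hadj' s t hsr ht ha with h | h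
          · rw [if_neg (show ¬ s = t - 1 by omega),
              if_pos (show s = t + 1 by omega)]
            ring
          · rw [if_pos (show s = t - 1 by omega),
              if_neg (show ¬ s = t + 1 by omega)]
            ring
        · have hne1 : ¬ s = t - 1 := by
            intro h
            apply ha
            have := hadj (t - 1) (by omega)
            rw [show t - 1 + 1 = t by omega] at this
            rwa [h]
          have hne2 : ¬ s = t + 1 := by
            intro h
            subst h
            exact ha (hadj t (by omega)).symm
          rw [if_neg ha, if_neg hne1, if_neg hne2]
          ring
      rw [Finset.sum_congr rfl key, Finset.sum_add_distrib,
        Finset.sum_ite_eq' _ (t - 1) (fun _ => (1 : ZMod 2)),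
        Finset.sum_ite_eq' _ (t + 1) (fun _ => (1 : ZMod 2)),
        if_pos ((hmem _).mpr ⟨by omega, by omega⟩),
        if_pos ((hmem _).mpr ⟨ht1, by omega⟩)]
      decide
    rw [hx, hz]; decide
  · -- support
    intro k hk
    by_cases h : ∃ t, t < r ∧ t % 2 = 0 ∧ p t = k
    · exact Or.inl h
    · right
      have hx : (∑ s ∈ (Finset.range r).filter (fun t => t % 2 = 0),
          pstrX (genStr G (p s) k)) = 0 := by
        apply Finset.sum_eq_zero
        intro s hs
        obtain ⟨hsr, hse⟩ := (hmem s).mp hs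
        rw [pstrX_genStr, if_neg]
        intro hh; exact h ⟨s, hsr, hse, hh.symm⟩
      by_cases hz : (∑ s ∈ (Finset.range r).filter (fun t => t % 2 = 0),
          pstrZ (genStr G (p s) k)) = 1
      · show pauliOfXZ _ _ = 3
        rw [hx, hz]; decide
      · exfalso
        apply hk
        show pauliOfXZ _ _ = 0
        rw [hx]
        unfold pauliOfXZ
        rw [if_neg (by decide), if_neg hz]
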